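/- Let U ∈ ℝ^{N×D} have unit-norm rows and define L(U) = Σ_{i≠j} [⟨Uᵢ,Uⱼ⟩ + (1/2)⟨Uᵢ,Uⱼ⟩²]. Then L(U) = ‖Σᵢ Uᵢ‖² − N + (1/2)(‖UᵀU‖_F² − N), and L(U) ≥ (1/2)(N²/D − N) − N whenever D ∣ N, with the lower bound attained when Σᵢ Uᵢ = 0 and UᵀU = (N/D)I_D. -/

import Mathlib

/-!
Summing the pairwise terms over all ordered pairs and then removing the diagonal, where
`⟨Uᵢ, Uᵢ⟩ = 1`, turns the linear part into `‖∑ᵢ Uᵢ‖²` and the quadratic part into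
`‖U Uᵀ‖_F² = ‖Uᵀ U‖_F²` (cyclicity of the trace). The Gram matrix `Uᵀ U` has trace `N`, so
Cauchy–Schwarz on its diagonal gives `‖Uᵀ U‖_F² ≥ N² / D`; both estimates are equalities when
`∑ᵢ Uᵢ = 0` and `Uᵀ U = (N / D) I`.
-/

open Matrix Finset

theorem Finset.sum_sum_erase_eq_sub {ι M : Type*} [Fintype ι] [DecidableEq ι] [AddCommGroup M]
    (f : ι → ι → M) : ∑ i, ∑ j ∈ univ.erase i, f i j = ∑ i, ∑ j, f i j - ∑ i, f i i := by
  simp only [sum_erase_eq_sub (mem_univ _), sum_sub_distrib]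

namespace Matrix

variable {ι κ R : Type*} [Fintype κ]

theorem mul_transpose_self_apply_self {U : Matrix ι κ ℝ} (hrows : ∀ i, ∑ k, U i k ^ 2 = 1)
    (i : ι) : (U * Uᵀ) i i = 1 := by
  simpa [mul_apply, sq] using hrows i

variable [Fintype ι]

theorem sum_sum_sq_eq_trace_mul_transpose [CommSemiring R] (A : Matrix ι κ R) :
    ∑ i, ∑ j, A i j ^ 2 = trace (A * Aᵀ) := by
  simp [trace, mul_apply, sq]

theorem sum_sum_sq_mul_transpose_self [CommSemiring R] (U : Matrix ι κ R) :
    ∑ i, ∑ j, (U * Uᵀ) i j ^ 2 = ∑ k, ∑ l, (Uᵀ * U) k l ^ 2 := by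
  simp only [sum_sum_sq_eq_trace_mul_transpose, transpose_mul, transpose_transpose]
  rw [Matrix.mul_assoc, trace_mul_comm]
  simp only [Matrix.mul_assoc]

theorem sum_sum_mul_transpose_self [CommSemiring R] (U : Matrix ι κ R) :
    ∑ i, ∑ j, (U * Uᵀ) i j = ∑ k, (∑ i, U i k) ^ 2 := by
  simp only [mul_apply, transpose_apply, sq, sum_mul_sum]
  calc _ = ∑ i, ∑ k, ∑ j, U i k * U j k := sum_congr rfl fun _ _ => sum_comm
    _ = _ := sum_comm

theorem trace_transpose_mul_self [CommSemiring R] (U : Matrix ι κ R) :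
    trace (Uᵀ * U) = ∑ i, (U * Uᵀ) i i := by
  rw [trace_mul_comm]
  rfl

theorem sq_trace_div_card_le_sum_sum_sq (A : Matrix κ κ ℝ) :
    trace A ^ 2 / Fintype.card κ ≤ ∑ k, ∑ l, A k l ^ 2 := by
  refine div_le_of_le_mul₀ (by positivity) (by positivity) ?_
  calc trace A ^ 2 ≤ Fintype.card κ * ∑ k, A k k ^ 2 := sq_sum_le_card_mul_sum_sq
    _ ≤ Fintype.card κ * ∑ k, ∑ l, A k l ^ 2 := by
      gcongr with k
      exact single_le_sum (f := fun l => A k l ^ 2) (fun _ _ => sq_nonneg _) (mem_univ k)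
    _ = _ := mul_comm _ _

theorem sum_sum_sq_smul_one [DecidableEq κ] [CommSemiring R] (c : R) :
    ∑ k, ∑ l, (c • (1 : Matrix κ κ R)) k l ^ 2 = Fintype.card κ * c ^ 2 := by
  simp [one_apply]

theorem card_sq_div_card_le_sum_sum_sq_transpose_mul_self {U : Matrix ι κ ℝ} (hrows : ∀ i, ∑ k, U i k ^ 2 = 1) :
    (Fintype.card ι : ℝ) ^ 2 / Fintype.card κ ≤ ∑ k, ∑ l, (Uᵀ * U) k l ^ 2 := by
  have htrace : trace (Uᵀ * U) = Fintype.card ι := by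
    simp [trace_transpose_mul_self, mul_transpose_self_apply_self hrows]
  simpa [htrace] using sq_trace_div_card_le_sum_sum_sq (Uᵀ * U)

end Matrix

section UnrestraintLoss

variable {ι κ : Type*} [Fintype ι] [Fintype κ] [DecidableEq ι]

noncomputable def unrestraintLoss (U : Matrix ι κ ℝ) : ℝ :=
  ∑ i, ∑ j ∈ univ.erase i, ((U * Uᵀ) i j + 1 / 2 * (U * Uᵀ) i j ^ 2)

variable {U : Matrix ι κ ℝ}

theorem unrestraintLoss_eq (hrows : ∀ i, ∑ k, U i k ^ 2 = 1) :
    unrestraintLoss U = ∑ k, (∑ i, U i k) ^ 2 - Fintype.card ι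
      + 1 / 2 * (∑ k, ∑ l, (Uᵀ * U) k l ^ 2 - Fintype.card ι) := by
  rw [unrestraintLoss, sum_sum_erase_eq_sub]
  simp only [mul_transpose_self_apply_self hrows, sum_add_distrib, ← mul_sum,
    sum_sum_mul_transpose_self, sum_sum_sq_mul_transpose_self, sum_const, card_univ]
  simp only [one_div, nsmul_eq_mul, mul_one, one_pow]
  ring

theorem le_unrestraintLoss (hrows : ∀ i, ∑ k, U i k ^ 2 = 1) :
    1 / 2 * ((Fintype.card ι : ℝ) ^ 2 / Fintype.card κ - Fintype.card ι) - Fintype.card ι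
      ≤ unrestraintLoss U := by
  have hcol : 0 ≤ ∑ k, (∑ i, U i k) ^ 2 := sum_nonneg fun _ _ => sq_nonneg _
  have hgram := card_sq_div_card_le_sum_sum_sq_transpose_mul_self hrows
  rw [unrestraintLoss_eq hrows]
  linarith

theorem unrestraintLoss_eq_of_sum_eq_zero_of_transpose_mul_self_eq [DecidableEq κ]
    (hrows : ∀ i, ∑ k, U i k ^ 2 = 1) (hcol : ∀ k, ∑ i, U i k = 0)
    (hgram : Uᵀ * U = ((Fintype.card ι : ℝ) / Fintype.card κ) • (1 : Matrix κ κ ℝ)) :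
    unrestraintLoss U
      = 1 / 2 * ((Fintype.card ι : ℝ) ^ 2 / Fintype.card κ - Fintype.card ι) - Fintype.card ι := by
  rw [unrestraintLoss_eq hrows, hgram, sum_sum_sq_smul_one]
  have hscalar : (Fintype.card κ : ℝ) * (Fintype.card ι / Fintype.card κ) ^ 2
      = (Fintype.card ι : ℝ) ^ 2 / Fintype.card κ := by
    rcases eq_or_ne (Fintype.card κ : ℝ) 0 with h | h
    · simp [h]
    · field_simp
  simp only [hcol, hscalar, zero_pow two_ne_zero, sum_const_zero]
  ring

end UnrestraintLoss

theorem unrestraint_loss_lower_bound_general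
    (N D : ℕ)
    (U : Matrix (Fin N) (Fin D) ℝ)
    (hrows : ∀ i, ∑ j, (U i j) ^ 2 = 1) :
    (∑ i, ∑ j ∈ Finset.univ.erase i,
        ((∑ k, U i k * U j k) + (1 / 2) * (∑ k, U i k * U j k) ^ 2)) =
      (∑ k, (∑ i, U i k) ^ 2) - N + (1 / 2) * ((∑ k, ∑ l, ((Uᵀ * U) k l) ^ 2) - N) ∧
    (1 / 2) * ((N : ℝ) ^ 2 / D - N) - N ≤
      (∑ i, ∑ j ∈ Finset.univ.erase i,
        ((∑ k, U i k * U j k) + (1 / 2) * (∑ k, U i k * U j k) ^ 2)) ∧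
    ((∀ k, ∑ i, U i k = 0) →
      Uᵀ * U = ((N : ℝ) / D) • (1 : Matrix (Fin D) (Fin D) ℝ) →
      (∑ i, ∑ j ∈ Finset.univ.erase i,
        ((∑ k, U i k * U j k) + (1 / 2) * (∑ k, U i k * U j k) ^ 2)) =
        (1 / 2) * ((N : ℝ) ^ 2 / D - N) - N) := by
  change unrestraintLoss U = _ ∧ _ ≤ unrestraintLoss U ∧ (_ → _ → unrestraintLoss U = _)
  refine ⟨?_, ?_, fun hcol hgram => ?_⟩
  · simpa using unrestraintLoss_eq hrows
  · simpa using le_unrestraintLoss hrows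
  · simpa using unrestraintLoss_eq_of_sum_eq_zero_of_transpose_mul_self_eq hrows hcol
      (by simpa using hgram)

theorem unrestraint_loss_lower_bound
    (N D : ℕ) (hN : 0 < N) (hD : 0 < D) (hdvd : D ∣ N)
    (U : Matrix (Fin N) (Fin D) ℝ)
    (hrows : ∀ i, ∑ j, (U i j) ^ 2 = 1) :
    (∑ i, ∑ j ∈ Finset.univ.erase i,
        ((∑ k, U i k * U j k) + (1 / 2) * (∑ k, U i k * U j k) ^ 2)) =
      (∑ k, (∑ i, U i k) ^ 2) - N + (1 / 2) * ((∑ k, ∑ l, ((Uᵀ * U) k l) ^ 2) - N) ∧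
    (1 / 2) * ((N : ℝ) ^ 2 / D - N) - N ≤
      (∑ i, ∑ j ∈ Finset.univ.erase i,
        ((∑ k, U i k * U j k) + (1 / 2) * (∑ k, U i k * U j k) ^ 2)) ∧
    ((∀ k, ∑ i, U i k = 0) →
      Uᵀ * U = ((N : ℝ) / D) • (1 : Matrix (Fin D) (Fin D) ℝ) →
      (∑ i, ∑ j ∈ Finset.univ.erase i,
        ((∑ k, U i k * U j k) + (1 / 2) * (∑ k, U i k * U j k) ^ 2)) =
        (1 / 2) * ((N : ℝ) ^ 2 / D - N) - N) :=
  unrestraint_loss_lower_bound_general N D U hrows
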